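/- arXiv:1802.07593 — 3 statements merged into one kernel-verified Lean document; each statement's English description precedes it below -/
import Mathlib

section
/- The Toda Lax matrix ℓ(j,λ) = [[λ + X_j, −exp(x_j)], [exp(−x_j), 0]] satisfies the ultralocal Poisson algebra relation {ℓ_a(j,λ), ℓ_b(k,μ)} = δ_{jk} [r(λ−μ), ℓ_a(j,λ)ℓ_b(k,μ)], where r(λ) = P/λ is the rational r-matrix. -/
open Matrix Kronecker

/-- Phase space of the N-site Toda chain: coordinates x and momenta X. -/
abbrev Phase (N : ℕ) := (Fin N → ℝ) × (Fin N → ℝ)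

/-- Canonical Poisson bracket with {X_j, x_k} = δ_{jk}. -/
noncomputable def pb {N : ℕ} (f g : Phase N → ℝ) : Phase N → ℝ :=
  fun p => ∑ j : Fin N,
    (fderiv ℝ f p (0, Pi.single j 1) * fderiv ℝ g p (Pi.single j 1, 0)
      - fderiv ℝ f p (Pi.single j 1, 0) * fderiv ℝ g p (0, Pi.single j 1))

/-- Entrywise Poisson bracket {A_a, B_b} = Σ {A_ij, B_kl} E_ij ⊗ E_kl. -/
noncomputable def matPB {N : ℕ} (A B : Matrix (Fin 2) (Fin 2) (Phase N → ℝ)) :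
    Matrix (Fin 2 × Fin 2) (Fin 2 × Fin 2) (Phase N → ℝ) :=
  fun ik jl => pb (A ik.1 jl.1) (B ik.2 jl.2)

/-- The Toda Lax matrix ℓ(j,λ). -/
noncomputable def ell {N : ℕ} (j : Fin N) (lam : ℝ) :
    Matrix (Fin 2) (Fin 2) (Phase N → ℝ) :=
  !![fun p => lam + p.2 j, fun p => -Real.exp (p.1 j);
     fun p => Real.exp (-(p.1 j)), 0]

/-- The permutation operator on ℂ²⊗ℂ² (here realized over the function algebra). -/
def PswapF {N : ℕ} : Matrix (Fin 2 × Fin 2) (Fin 2 × Fin 2) (Phase N → ℝ) :=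
  fun ij kl => if ij.1 = kl.2 ∧ ij.2 = kl.1 then 1 else 0

/-- The rational r-matrix r(λ) = P/λ as a matrix of constant functions. -/
noncomputable def rMat {N : ℕ} (lam : ℝ) :
    Matrix (Fin 2 × Fin 2) (Fin 2 × Fin 2) (Phase N → ℝ) :=
  fun a b => fun _ => lam⁻¹ * (if a.1 = b.2 ∧ a.2 = b.1 then 1 else 0)

/-! The entries of `ell j λ` depend only on the canonical pair `(x_j, X_j)`, so their brackets
vanish between different sites, and at a single site the canonical bracket of entries gives
`{ℓ_a, ℓ_b} = ∂_X ℓ ⊗ ∂_x ℓ - ∂_x ℓ ⊗ ∂_X ℓ`, a matrix free of `λ` and `μ`. On the other side,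
`ℓ(λ)` is affine in `λ` with `∂_λ ℓ = ∂_X ℓ`, so in `[P, ℓ(λ) ⊗ ℓ(μ)]` the quadratic terms cancel
and every remaining entry is divisible by `λ - μ`; checking the sixteen entries finishes. -/

theorem pb_apply_of_fderiv {N : ℕ} {f g : Phase N → ℝ} {p : Phase N} {j k : Fin N}
    {fx fX gx gX : ℝ}
    (hf : ∀ v, fderiv ℝ f p v = fx * v.1 j + fX * v.2 j)
    (hg : ∀ v, fderiv ℝ g p v = gx * v.1 k + gX * v.2 k) :
    pb f g p = if j = k then fX * gx - fx * gX else 0 := by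
  simp only [pb, hf, hg, Pi.single_apply, Pi.zero_apply, mul_ite, ite_mul, mul_one, mul_zero,
    zero_mul, zero_add, add_zero, Finset.sum_sub_distrib, Finset.sum_ite_eq, Finset.mem_univ,
    if_true]
  split_ifs <;> ring

section TodaLax
variable {N : ℕ}

noncomputable def coordCLM (j : Fin N) : Phase N →L[ℝ] ℝ :=
  (ContinuousLinearMap.proj j).comp (ContinuousLinearMap.fst ℝ _ _)

noncomputable def momentumCLM (j : Fin N) : Phase N →L[ℝ] ℝ :=
  (ContinuousLinearMap.proj j).comp (ContinuousLinearMap.snd ℝ _ _)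

noncomputable def ellDerivCoord (j : Fin N) : Matrix (Fin 2) (Fin 2) (Phase N → ℝ) :=
  !![0, fun p => -Real.exp (p.1 j); fun p => -Real.exp (-(p.1 j)), 0]

def ellDerivMomentum : Matrix (Fin 2) (Fin 2) (Phase N → ℝ) := !![1, 0; 0, 0]

theorem hasFDerivAt_ell (j : Fin N) (lam : ℝ) (a b : Fin 2) (p : Phase N) :
    HasFDerivAt (ell j lam a b)
      (ellDerivCoord j a b p • coordCLM j + ellDerivMomentum a b p • momentumCLM j) p := by
  have hx : HasFDerivAt (fun p : Phase N => p.1 j) (coordCLM j) p := (coordCLM j).hasFDerivAt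
  have hX : HasFDerivAt (fun p : Phase N => p.2 j) (momentumCLM j) p := (momentumCLM j).hasFDerivAt
  fin_cases a <;> fin_cases b
  · refine (hX.const_add lam).congr_fderiv (ContinuousLinearMap.ext fun v => ?_)
    simp [ellDerivCoord, ellDerivMomentum, coordCLM, momentumCLM]
  · refine ((Real.hasDerivAt_exp _).comp_hasFDerivAt p hx).neg.congr_fderiv
      (ContinuousLinearMap.ext fun v => ?_)
    simp [ellDerivCoord, ellDerivMomentum, coordCLM, momentumCLM]
  · refine ((Real.hasDerivAt_exp _).comp_hasFDerivAt p hx.neg).congr_fderiv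
      (ContinuousLinearMap.ext fun v => ?_)
    simp [ellDerivCoord, ellDerivMomentum, coordCLM, momentumCLM]
  · refine (hasFDerivAt_const (0 : ℝ) p).congr_fderiv (ContinuousLinearMap.ext fun v => ?_)
    simp [ellDerivCoord, ellDerivMomentum, coordCLM, momentumCLM]

theorem fderiv_ell_apply (j : Fin N) (lam : ℝ) (a b : Fin 2) (p v : Phase N) :
    fderiv ℝ (ell j lam a b) p v =
      ellDerivCoord j a b p * v.1 j + ellDerivMomentum a b p * v.2 j := by
  rw [(hasFDerivAt_ell j lam a b p).fderiv]; rfl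

theorem matPB_ell_ell (j k : Fin N) (lam mu : ℝ) :
    matPB (ell j lam) (ell k mu) =
      if j = k then ellDerivMomentum ⊗ₖ ellDerivCoord j - ellDerivCoord j ⊗ₖ ellDerivMomentum
      else 0 := by
  ext ik jl p
  rw [matPB, pb_apply_of_fderiv (fderiv_ell_apply j lam _ _ p) (fderiv_ell_apply k mu _ _ p)]
  split_ifs with hjk
  · subst hjk; rfl
  · rfl

theorem commutator_rMat_ell (j : Fin N) {lam mu : ℝ} (h : lam - mu ≠ 0) :
    rMat (lam - mu) * ((ell j lam ⊗ₖ (1 : Matrix (Fin 2) (Fin 2) (Phase N → ℝ)))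
        * ((1 : Matrix (Fin 2) (Fin 2) (Phase N → ℝ)) ⊗ₖ ell j mu))
      - ((ell j lam ⊗ₖ (1 : Matrix (Fin 2) (Fin 2) (Phase N → ℝ)))
        * ((1 : Matrix (Fin 2) (Fin 2) (Phase N → ℝ)) ⊗ₖ ell j mu)) * rMat (lam - mu) =
      ellDerivMomentum ⊗ₖ ellDerivCoord j - ellDerivCoord j ⊗ₖ ellDerivMomentum := by
  rw [← Matrix.mul_kronecker_mul, Matrix.mul_one, Matrix.one_mul]
  ext ⟨i1, i2⟩ ⟨j1, j2⟩ p
  fin_cases i1 <;> fin_cases i2 <;> fin_cases j1 <;> fin_cases j2 <;>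
    simp [rMat, ell, ellDerivCoord, ellDerivMomentum, Matrix.mul_apply, Fintype.sum_prod_type,
      Matrix.sub_apply, Pi.sub_apply, Pi.mul_apply] <;>
    field_simp <;> ring

end TodaLax

/-- the Toda Lax matrix satisfies the ultralocal Poisson algebra
    {ℓ_a(j,λ), ℓ_b(k,μ)} = δ_{jk} [r(λ−μ), ℓ_a(j,λ) ℓ_b(k,μ)]. -/
theorem toda_ultralocal (N : ℕ) (j k : Fin N) (lam mu : ℝ) (h : lam - mu ≠ 0) :
    matPB (ell j lam) (ell k mu) =
      if j = k then
        rMat (lam - mu) * ((ell j lam ⊗ₖ (1 : Matrix (Fin 2) (Fin 2) (Phase N → ℝ)))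
            * ((1 : Matrix (Fin 2) (Fin 2) (Phase N → ℝ)) ⊗ₖ ell k mu))
        - ((ell j lam ⊗ₖ (1 : Matrix (Fin 2) (Fin 2) (Phase N → ℝ)))
            * ((1 : Matrix (Fin 2) (Fin 2) (Phase N → ℝ)) ⊗ₖ ell k mu)) * rMat (lam - mu)
      else 0 := by
  rw [matPB_ell_ell]
  split_ifs with hjk
  · subst hjk
    exact (commutator_rMat_ell j h).symm
  · rfl
end

section
/- The constant matrix k⁻(λ) = [[λθ₁ + α₁, λ], [−β₁λ, −λθ₁ + α₁]] satisfies the non-dynamical classical reflection equation r₁₂(λ−μ)k⁻₁(λ)k⁻₂(μ) − k⁻₁(λ)k⁻₂(μ)r₂₁(λ−μ) + k⁻₁(λ)r₂₁(λ+μ)k⁻₂(μ) − k⁻₂(μ)r₁₂(λ+μ)k⁻₁(λ) = 0, with r(λ) = P/λ. -/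
open Matrix Kronecker

set_option maxHeartbeats 4000000

/-- The permutation operator on ℝ²⊗ℝ². -/
def Pswap : Matrix (Fin 2 × Fin 2) (Fin 2 × Fin 2) ℝ :=
  fun ij kl => if ij.1 = kl.2 ∧ ij.2 = kl.1 then 1 else 0

/-- The rational r-matrix r₁₂(λ) = P/λ. -/
noncomputable def r12 (l : ℝ) : Matrix (Fin 2 × Fin 2) (Fin 2 × Fin 2) ℝ := l⁻¹ • Pswap

/-- r₂₁(λ) = P r₁₂(λ) P. -/
noncomputable def r21 (l : ℝ) : Matrix (Fin 2 × Fin 2) (Fin 2 × Fin 2) ℝ :=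
  Pswap * r12 l * Pswap

/-- The constant boundary matrix k⁻(λ). -/
def kminus (a1 b1 t1 l : ℝ) : Matrix (Fin 2) (Fin 2) ℝ :=
  !![l * t1 + a1, l; -b1 * l, -l * t1 + a1]

/-- k⁻(λ) satisfies the non-dynamical classical reflection equation. -/
theorem kminus_reflection (a1 b1 t1 : ℝ) (lam mu : ℝ)
    (hd : lam - mu ≠ 0) (hs : lam + mu ≠ 0) (hl : lam ≠ 0) (hm : mu ≠ 0) :
    r12 (lam - mu) * (kminus a1 b1 t1 lam ⊗ₖ (1 : Matrix (Fin 2) (Fin 2) ℝ))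
        * ((1 : Matrix (Fin 2) (Fin 2) ℝ) ⊗ₖ kminus a1 b1 t1 mu)
    - (kminus a1 b1 t1 lam ⊗ₖ (1 : Matrix (Fin 2) (Fin 2) ℝ))
        * ((1 : Matrix (Fin 2) (Fin 2) ℝ) ⊗ₖ kminus a1 b1 t1 mu) * r21 (lam - mu)
    + (kminus a1 b1 t1 lam ⊗ₖ (1 : Matrix (Fin 2) (Fin 2) ℝ)) * r21 (lam + mu)
        * ((1 : Matrix (Fin 2) (Fin 2) ℝ) ⊗ₖ kminus a1 b1 t1 mu)
    - ((1 : Matrix (Fin 2) (Fin 2) ℝ) ⊗ₖ kminus a1 b1 t1 mu) * r12 (lam + mu)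
        * (kminus a1 b1 t1 lam ⊗ₖ (1 : Matrix (Fin 2) (Fin 2) ℝ)) = 0 := by
  have hPP : Pswap * Pswap = (1 : Matrix (Fin 2 × Fin 2) (Fin 2 × Fin 2) ℝ) := by
    ext ⟨i,j⟩ ⟨k,l⟩
    simp only [Matrix.mul_apply, Pswap, Matrix.one_apply, Fintype.sum_prod_type,
      Fin.sum_univ_two]
    fin_cases i <;> fin_cases j <;> fin_cases k <;> fin_cases l <;> norm_num [Prod.ext_iff]
  have hr : ∀ l : ℝ, r21 l = r12 l := by
    intro l
    unfold r21 r12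
    rw [Matrix.mul_smul, Matrix.smul_mul, hPP, Matrix.one_mul]
  rw [hr, hr]
  ext ⟨i,j⟩ ⟨k,l⟩
  simp only [Matrix.sub_apply, Matrix.add_apply, Matrix.mul_apply, Matrix.zero_apply,
    r12, Pswap, kminus, Matrix.kroneckerMap_apply, Matrix.smul_apply, smul_eq_mul,
    Fintype.sum_prod_type, Fin.sum_univ_two, Matrix.one_apply]
  fin_cases i <;> fin_cases j <;> fin_cases k <;> fin_cases l <;>
    norm_num [Matrix.cons_val_zero, Matrix.cons_val_one, Matrix.head_cons] <;>
    field_simp <;> ring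
end

section
/- The matrix k⁺(λ) = [[λθ_N + α_N, λβ_N], [−λ, −λθ_N + α_N]] satisfies the reflection equation r₂₁(λ−μ)k⁺₁(λ)k⁺₂(μ) − k⁺₁(λ)k⁺₂(μ)r₁₂(λ−μ) + k⁺₁(λ)r₁₂(λ+μ)k⁺₂(μ) − k⁺₂(μ)r₂₁(λ+μ)k⁺₁(λ) = 0 with the rational r-matrix r(λ) = P/λ. -/
open Matrix Kronecker

/-- The constant boundary matrix k⁺(λ). -/
def kplus (aN bN tN l : ℝ) : Matrix (Fin 2) (Fin 2) ℝ :=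
  !![l * tN + aN, l * bN; -l, -l * tN + aN]

set_option maxHeartbeats 4000000 in
/-- k⁺(λ) satisfies the corresponding reflection equation. -/
theorem kplus_reflection (aN bN tN : ℝ) (lam mu : ℝ)
    (hd : lam - mu ≠ 0) (hs : lam + mu ≠ 0) :
    r21 (lam - mu) * (kplus aN bN tN lam ⊗ₖ (1 : Matrix (Fin 2) (Fin 2) ℝ))
        * ((1 : Matrix (Fin 2) (Fin 2) ℝ) ⊗ₖ kplus aN bN tN mu)
    - (kplus aN bN tN lam ⊗ₖ (1 : Matrix (Fin 2) (Fin 2) ℝ))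
        * ((1 : Matrix (Fin 2) (Fin 2) ℝ) ⊗ₖ kplus aN bN tN mu) * r12 (lam - mu)
    + (kplus aN bN tN lam ⊗ₖ (1 : Matrix (Fin 2) (Fin 2) ℝ)) * r12 (lam + mu)
        * ((1 : Matrix (Fin 2) (Fin 2) ℝ) ⊗ₖ kplus aN bN tN mu)
    - ((1 : Matrix (Fin 2) (Fin 2) ℝ) ⊗ₖ kplus aN bN tN mu) * r21 (lam + mu)
        * (kplus aN bN tN lam ⊗ₖ (1 : Matrix (Fin 2) (Fin 2) ℝ)) = 0 := by
  ext ⟨i,j⟩ ⟨k,l⟩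
  fin_cases i <;> fin_cases j <;> fin_cases k <;> fin_cases l <;>
  · simp only [r21, r12, Pswap, kplus, Matrix.mul_apply, Matrix.smul_apply,
      Matrix.kroneckerMap_apply, Fintype.sum_prod_type, Fin.sum_univ_two,
      Matrix.sub_apply, Matrix.add_apply, Matrix.zero_apply, Matrix.one_apply,
      smul_eq_mul, Matrix.of_apply, Matrix.cons_val', Matrix.cons_val_zero,
      Matrix.cons_val_one, Matrix.head_cons, Matrix.head_fin_const,
      Matrix.empty_val', Matrix.cons_val_fin_one, Prod.mk.injEq]
    norm_num
    try field_simp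
    try ring
end
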